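/- arXiv:2605.17736 — 2 statements merged into one kernel-verified Lean document; each statement's English description precedes it below -/
import Mathlib

section
/- Let Q be a regular local ring with maximal ideal n, and let f₁,…,f_c (c ≥ 2) be a regular sequence in Q. In the polynomial ring P = Q[x₁,…,x_c], the element w = f₁x₁ + ⋯ + f_c x_c is irreducible. -/
/-!
Write `w = a * b` and compare the coefficients of degree `≤ 1`: the constant terms `α`, `β`
satisfy `α β = 0` and the linear ones satisfy `α b_i + a_i β = f_i`. Since `(f₁, f₂)` is regular
and `Q` is local, these relations force `α` or `β` to be a unit; say `α`. Then `a` divides the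
homogeneous nonzerodivisor `w` and has invertible constant term. Substituting `x ↦ t x` turns
this into `a(t x) ∣ w t` in `P[t]`; the inverse of `a(t x)` as a power series in `t` has all
coefficients of large degree killed by the nonzerodivisor `w`, so it is a polynomial and `a`
is a unit.
-/

open IsLocalRing

/-- A regular local ring: a commutative Noetherian local ring whose Krull dimension
equals the minimal number of generators of its maximal ideal, i.e. the dimension of
its cotangent space `n/n²` over the residue field. -/
def IsRegularLocal (Q : Type*) [CommRing Q] [IsLocalRing Q] [IsNoetherianRing Q] : Prop :=
  ringKrullDim Q =
    (Module.finrank (ResidueField Q) (CotangentSpace Q) : WithBot (WithTop ℕ))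

open RingTheory.Sequence
open scoped nonZeroDivisors MonomialOrder

theorem RingTheory.Sequence.IsWeaklyRegular.dvd_of_dvd_mul {R : Type*} [CommRing R] {a b x : R}
    (h : IsWeaklyRegular R [a, b]) (hx : a ∣ b * x) : a ∣ x := by
  rw [isWeaklyRegular_cons_iff, isWeaklyRegular_singleton_iff] at h
  have hmk : b • (Submodule.Quotient.mk x : QuotSMulTop a R) = 0 := by
    rw [← Submodule.Quotient.mk_smul, Submodule.Quotient.mk_eq_zero,
      Submodule.mem_smul_pointwise_iff_exists]
    obtain ⟨y, hy⟩ := hx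
    exact ⟨y, Submodule.mem_top, hy.symm⟩
  obtain ⟨y, -, hy⟩ := (Submodule.mem_smul_pointwise_iff_exists _ _ _).1
    ((Submodule.Quotient.mk_eq_zero _).1 (h.2.right_eq_zero_of_smul hmk))
  exact ⟨y, hy.symm⟩

theorem RingTheory.Sequence.IsWeaklyRegular.head_mem_nonZeroDivisors {R : Type*} [CommRing R]
    {a : R} {l : List R} (h : IsWeaklyRegular R (a :: l)) : a ∈ R⁰ :=
  mem_nonZeroDivisors_iff_left.2 fun _ =>
    ((isWeaklyRegular_cons_iff R a l).1 h).1.right_eq_zero_of_smul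

namespace IsLocalRing
variable {R : Type*} [CommRing R] [IsLocalRing R] {a b : R}

theorem isUnit_of_dvd_of_dvd_of_isWeaklyRegular (h : IsWeaklyRegular R [a, b]) {q : R}
    (ha : q ∣ a) (hb : q ∣ b) : IsUnit q := by
  obtain ⟨c, rfl⟩ := ha
  obtain ⟨d, rfl⟩ := hb
  obtain ⟨s, hs⟩ := h.dvd_of_dvd_mul (x := c) ⟨d, by ring⟩
  by_contra hq
  have hunit : IsUnit (1 - q * s) :=
    isUnit_one_sub_self_of_mem_nonunits _ fun hqs => hq (isUnit_of_mul_isUnit_left hqs)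
  have hc : c = 0 := hunit.mul_left_eq_zero.1 (by linear_combination hs)
  have hreg := h.head_mem_nonZeroDivisors
  rw [hc, mul_zero] at hreg
  exact zero_notMem_nonZeroDivisors hreg

/-- Read `α + a₀ x₀ + a₁ x₁ + ⋯` and `β + b₀ x₀ + b₁ x₁ + ⋯` as the terms of degree `≤ 1` of two
polynomials whose product is `a x₀ + b x₁ + ⋯`. -/
theorem isUnit_or_isUnit_of_isWeaklyRegular (h : IsWeaklyRegular R [a, b])
    {α β a₀ a₁ b₀ b₁ : R} (hαβ : α * β = 0) (ha : α * b₀ + a₀ * β = a)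
    (hb : α * b₁ + a₁ * β = b) : IsUnit α ∨ IsUnit β := by
  have hcross : b * (α * b₀) = a * (α * b₁) := by
    linear_combination α * b₁ * ha - α * b₀ * hb + (a₁ * b₀ - a₀ * b₁) * hαβ
  obtain ⟨t, ht⟩ := h.dvd_of_dvd_mul ⟨α * b₁, hcross⟩
  have ht' : α * b₁ = b * t := sub_eq_zero.1 <| mem_nonZeroDivisors_iff_left.1
    h.head_mem_nonZeroDivisors _ (by linear_combination b * ht - hcross)
  rcases isUnit_or_isUnit_one_sub_self t with hu | hu
  · refine .inl (isUnit_of_dvd_of_dvd_of_isWeaklyRegular h ?_ ?_)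
    · exact hu.dvd_mul_right.1 ⟨b₀, ht.symm⟩
    · exact hu.dvd_mul_right.1 ⟨b₁, ht'.symm⟩
  · refine .inr (isUnit_of_dvd_of_dvd_of_isWeaklyRegular h ?_ ?_)
    · exact hu.dvd_mul_right.1 ⟨a₀, by linear_combination ht - ha⟩
    · exact hu.dvd_mul_right.1 ⟨a₁, by linear_combination ht' - hb⟩

end IsLocalRing

namespace Polynomial
variable {R : Type*} [CommRing R]

theorem isUnit_of_dvd_C_mul_X_pow {p : R[X]} {r : R} {n : ℕ} (hr : r ∈ R⁰)
    (hp : IsUnit (p.coeff 0)) (hdvd : p ∣ C r * X ^ n) : IsUnit p := by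
  obtain ⟨q, hq⟩ := hdvd
  obtain ⟨u, hu⟩ : IsUnit (p : PowerSeries R) := by
    rwa [PowerSeries.isUnit_iff_constantCoeff, ← PowerSeries.coeff_zero_eq_constantCoeff_apply,
      coeff_coe]
  set V : PowerSeries R := ↑u⁻¹
  have hq' : (q : PowerSeries R) = V * PowerSeries.C r * PowerSeries.X ^ n := by
    rw [mul_assoc, ← coe_C, ← coe_X, ← coe_pow, ← coe_mul, hq, coe_mul, ← hu, ← mul_assoc,
      Units.inv_mul, one_mul]
  have hV : ∀ m, q.natDegree < m + n → PowerSeries.coeff m V = 0 := fun m hm =>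
    (mem_nonZeroDivisors_iff_right.1 hr) _ <| by
      rw [← PowerSeries.coeff_mul_C, ← PowerSeries.coeff_mul_X_pow, ← hq', coeff_coe,
        coeff_eq_zero_of_natDegree_lt hm]
  have htrunc : (PowerSeries.trunc (q.natDegree + 1) V : PowerSeries R) = V := by
    ext m
    rw [coeff_coe, PowerSeries.coeff_trunc]
    split_ifs with hm
    · rfl
    · exact (hV m (by omega)).symm
  refine .of_mul_eq_one (PowerSeries.trunc (q.natDegree + 1) V) (coe_inj.1 ?_)
  rw [coe_mul, htrunc, ← hu, Units.mul_inv, coe_one]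

end Polynomial

namespace MvPolynomial
variable {σ R : Type*} [CommRing R]

/-- `dilate p = p(t • x)`, as a polynomial in `t`. -/
noncomputable def dilate : MvPolynomial σ R →+* Polynomial (MvPolynomial σ R) :=
  eval₂Hom (Polynomial.C.comp C) fun i => Polynomial.C (X i) * Polynomial.X

theorem dilate_monomial (d : σ →₀ ℕ) (a : R) :
    dilate (monomial d a) = Polynomial.C (monomial d a) * Polynomial.X ^ d.degree := by
  rw [dilate, coe_eval₂Hom, eval₂_monomial, monomial_eq, Finsupp.prod, Finsupp.prod,
    Finsupp.degree_apply]
  simp only [mul_pow, Finset.prod_mul_distrib, Finset.prod_pow_eq_pow_sum, map_mul, map_prod,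
    map_pow, RingHom.comp_apply, mul_assoc]

theorem dilate_of_isHomogeneous {p : MvPolynomial σ R} {n : ℕ} (hp : p.IsHomogeneous n) :
    dilate p = Polynomial.C p * Polynomial.X ^ n := by
  conv_lhs => rw [p.as_sum]
  rw [map_sum, Finset.sum_congr rfl fun d hd => by
      rw [dilate_monomial, Finsupp.degree_apply, ← hp.degree_eq_sum_deg_support hd],
    ← Finset.sum_mul, ← map_sum, ← p.as_sum]

theorem eval_one_dilate (p : MvPolynomial σ R) : (dilate p).eval 1 = p := by
  have h : (Polynomial.evalRingHom 1).comp dilate = RingHom.id (MvPolynomial σ R) :=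
    ringHom_ext (fun r => by simp [dilate]) fun i => by simp [dilate]
  exact RingHom.congr_fun h p

theorem coeff_zero_dilate (p : MvPolynomial σ R) : (dilate p).coeff 0 = C (constantCoeff p) := by
  have h : Polynomial.constantCoeff.comp dilate = C.comp (constantCoeff (σ := σ) (R := R)) :=
    ringHom_ext (fun r => by simp [dilate]) fun i => by simp [dilate]
  exact RingHom.congr_fun h p

theorem coeff_single_one_mul (i : σ) (p q : MvPolynomial σ R) :
    coeff (Finsupp.single i 1) (p * q) =
      constantCoeff p * coeff (Finsupp.single i 1) q +
        coeff (Finsupp.single i 1) p * constantCoeff q := by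
  classical
  rw [coeff_mul, Finsupp.antidiagonal_single]
  simp [Finset.Nat.antidiagonal_succ, constantCoeff_eq]

theorem sum_C_mul_X_mem_nonZeroDivisors {n : ℕ}
    (f : Fin (n + 1) → R) (hf : f 0 ∈ R⁰) :
    ∑ i, C (f i) * X i ∈ (MvPolynomial (Fin (n + 1)) R)⁰ := by
  classical
  obtain hR | hR := subsingleton_or_nontrivial R
  · simp [Subsingleton.elim _ (1 : MvPolynomial (Fin (n + 1)) R)]
  -- in the lexicographic order the leading term is `C (f 0) * X 0`
  have hlt : MonomialOrder.lex.degree (∑ i : Fin n, C (f i.succ) * X i.succ)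
      ≺[MonomialOrder.lex] MonomialOrder.lex.degree (C (f 0) * X (0 : Fin (n + 1))) := by
    rw [C_mul_X_eq_monomial, MonomialOrder.degree_monomial, if_neg (nonZeroDivisors.ne_zero hf)]
    refine MonomialOrder.degree_sum_le.trans_lt ((Finset.sup_lt_iff ?_).2 fun i _ => ?_)
    · exact (MonomialOrder.lex.toSyn_lt_iff_ne_zero).2 (by simp)
    · rw [C_mul_X_eq_monomial]
      exact MonomialOrder.degree_monomial_le _ |>.trans_lt
        (Finsupp.Lex.single_lt_iff.2 i.succ_pos)
  refine MonomialOrder.lex.mem_nonZeroDivisors_of_leadingCoeff_mem_nonZeroDivisors ?_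
  rwa [Fin.sum_univ_succ, MonomialOrder.leadingCoeff_add_of_lt hlt, C_mul_X_eq_monomial,
    MonomialOrder.leadingCoeff_monomial]

theorem isUnit_of_dvd_of_isHomogeneous {w p : MvPolynomial σ R} {n : ℕ} (hw : w.IsHomogeneous n)
    (hw₀ : w ∈ (MvPolynomial σ R)⁰) (hp : IsUnit (constantCoeff p)) (hdvd : p ∣ w) :
    IsUnit p := by
  have hdilate : IsUnit (dilate p) := by
    refine Polynomial.isUnit_of_dvd_C_mul_X_pow hw₀ ?_
      (dilate_of_isHomogeneous hw ▸ map_dvd dilate hdvd)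
    rw [coeff_zero_dilate]
    exact hp.map C
  simpa only [Polynomial.coe_evalRingHom, eval_one_dilate] using
    hdilate.map (Polynomial.evalRingHom 1)

end MvPolynomial

open MvPolynomial in
theorem generic_hypersurface_irreducible_general
    (Q : Type*) [CommRing Q] [IsLocalRing Q]
    (c : ℕ) (hc : 2 ≤ c) (f : Fin c → Q)
    (hf : RingTheory.Sequence.IsRegular Q (List.ofFn f)) :
    Irreducible (∑ i, MvPolynomial.C (f i) * MvPolynomial.X i :
      MvPolynomial (Fin c) Q) := by
  obtain ⟨k, rfl⟩ : ∃ k, c = k + 2 := ⟨c - 2, by omega⟩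
  have hpair : IsWeaklyRegular Q [f 0, f 1] := by
    have := hf.toIsWeaklyRegular
    rw [List.ofFn_succ, List.ofFn_succ] at this
    exact ((isWeaklyRegular_append_iff Q [f 0, f 1] _).1 this).1
  set w : MvPolynomial (Fin (k + 2)) Q := ∑ i, C (f i) * X i
  have hw : w.IsHomogeneous 1 := IsHomogeneous.sum _ _ _ fun i _ => isHomogeneous_C_mul_X _ _
  have hw₀ : w ∈ (MvPolynomial (Fin (k + 2)) Q)⁰ :=
    sum_C_mul_X_mem_nonZeroDivisors f hpair.head_mem_nonZeroDivisors
  have hconst : constantCoeff w = 0 := by simp [w]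
  have hlin : ∀ i, coeff (Finsupp.single i 1) w = f i := fun i => by
    simp [w, coeff_sum, coeff_C_mul, coeff_X, Finsupp.single_left_inj one_ne_zero]
  refine ⟨fun hu => ?_, fun a b hab => ?_⟩
  · simpa [hconst] using hu.map constantCoeff
  · have hunit := IsLocalRing.isUnit_or_isUnit_of_isWeaklyRegular hpair
      (α := constantCoeff a) (β := constantCoeff b) (by rw [← map_mul, ← hab, hconst])
      (by rw [← coeff_single_one_mul, ← hab, hlin]) (by rw [← coeff_single_one_mul, ← hab, hlin])
    exact hunit.imp (fun h => isUnit_of_dvd_of_isHomogeneous hw hw₀ h ⟨b, hab⟩)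
      (fun h => isUnit_of_dvd_of_isHomogeneous hw hw₀ h ⟨a, hab.trans (mul_comm _ _)⟩)

/-- Let `Q` be a regular local ring and `f₁, …, f_c` (`c ≥ 2`) a regular sequence in `Q`.
Then `w = f₁x₁ + ⋯ + f_cx_c` is irreducible in the polynomial ring `P = Q[x₁, …, x_c]`. -/
theorem generic_hypersurface_irreducible
    (Q : Type*) [CommRing Q] [IsLocalRing Q] [IsNoetherianRing Q]
    (hQ : IsRegularLocal Q)
    (c : ℕ) (hc : 2 ≤ c) (f : Fin c → Q)
    (hf : RingTheory.Sequence.IsRegular Q (List.ofFn f)) :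
    Irreducible (∑ i, MvPolynomial.C (f i) * MvPolynomial.X i :
      MvPolynomial (Fin c) Q) :=
  generic_hypersurface_irreducible_general Q c hc f hf
end

section
/- Let (R, m, k) be a local ring and C a totally acyclic complex of finitely generated free R-modules. If C is contractible at some position n (i.e., there exist sₙ : Cₙ → C_{n+1}, s_{n-1} : C_{n-1} → Cₙ with ∂_{n+1}sₙ + s_{n-1}∂ₙ an isomorphism), then C is contractible. -/
/-!
An exact complex all of whose differentials have inner inverses (`∂ g ∂ = ∂`) is contractible: if
`gᵢ` is an inner inverse of `∂ᵢ₊₁`, then `hᵢ = gᵢ ∘ (1 - gᵢ₋₁ ∘ ∂ᵢ)` is a contracting homotopy.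

In an exact sequence `X → Y → Z` with `Y` projective, an inner inverse of `Y → Z` yields one of
`X → Y`. Applied to `C` this moves inner inverses up the complex; applied to the exact dual
complex, whose terms are again finitely generated projective and whose dual is `C` again, it moves
them down. It remains to find one: `e = ∂ₙ₊₁ sₙ + sₙ₋₁ ∂ₙ` maps `Zₙ = ker ∂ₙ` into itself, so it
induces a surjective, hence injective (Vasconcelos), endomorphism of the finitely generated module
`Cₙ / Zₙ`. Thus `e⁻¹` also preserves `Zₙ`, which makes `e⁻¹ sₙ₋₁` an inner inverse of `∂ₙ`.
-/

open CategoryTheory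
universe u

namespace LinearMap

section Semiring

variable {R M N : Type*} [Semiring R] [AddCommMonoid M] [AddCommMonoid N] [Module R M] [Module R N]

def HasInnerInverse (f : M →ₗ[R] N) : Prop :=
  ∃ g : N →ₗ[R] M, f ∘ₗ g ∘ₗ f = f

end Semiring

variable {R M N P : Type*}

theorem HasInnerInverse.of_exact [Ring R] [AddCommGroup M] [AddCommGroup N] [AddCommGroup P]
    [Module R M] [Module R N] [Module R P] [Module.Projective R N]
    {f : M →ₗ[R] N} {g : N →ₗ[R] P} (hfg : Function.Exact f g) (hg : g.HasInnerInverse) :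
    f.HasInnerInverse := by
  obtain ⟨u, hu⟩ := hg
  have hmem (y : N) : y - u (g y) ∈ range f := by
    have hguy : g (u (g y)) = g y := congr($hu y)
    exact (hfg _).1 (by simp [hguy])
  obtain ⟨v, hv⟩ := Module.projective_lifting_property f.rangeRestrict
    (codRestrict _ (id - u ∘ₗ g) hmem) f.surjective_rangeRestrict
  have hfv (y : N) : f (v y) = y - u (g y) := congr(Subtype.val ($hv y))
  exact ⟨v, ext fun x => by simp [hfv, hfg.apply_apply_eq_zero]⟩

section CommSemiring

variable [CommSemiring R] [AddCommMonoid M] [AddCommMonoid N] [Module R M] [Module R N]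

theorem HasInnerInverse.dualMap {f : M →ₗ[R] N} (hf : f.HasInnerInverse) :
    f.dualMap.HasInnerInverse := by
  obtain ⟨g, hg⟩ := hf
  exact ⟨g.dualMap, by rw [dualMap_comp_dualMap, dualMap_comp_dualMap, comp_assoc, hg]⟩

theorem HasInnerInverse.of_dualMap [Module.IsReflexive R M] [Module.IsReflexive R N]
    {f : M →ₗ[R] N} (hf : f.dualMap.HasInnerInverse) : f.HasInnerInverse := by
  obtain ⟨g, hg⟩ := hf
  refine ⟨(Module.evalEquiv R M).symm ∘ₗ g.dualMap ∘ₗ Module.Dual.eval R N, ext fun x => ?_⟩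
  refine (Module.bijective_dual_eval R N).injective (ext fun φ => ?_)
  simp only [Module.Dual.eval_apply, comp_apply, LinearEquiv.coe_coe]
  rw [← dualMap_apply f φ, Module.apply_evalEquiv_symm_apply]
  simpa using congr($hg φ x)

end CommSemiring

theorem _root_.Submodule.comap_eq_self_of_le_comap [CommRing R] [AddCommGroup M] [Module R M]
    [Module.Finite R M] {e : M →ₗ[R] M} (he : Function.Surjective e) {N : Submodule R M}
    (hN : N ≤ N.comap e) : N.comap e = N := by
  refine le_antisymm (fun x hx => ?_) hN
  have hsurj : Function.Surjective (N.mapQ N e hN) := by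
    intro y
    obtain ⟨y, rfl⟩ := N.mkQ_surjective y
    obtain ⟨x, rfl⟩ := he y
    exact ⟨N.mkQ x, rfl⟩
  have := OrzechProperty.injective_of_surjective_endomorphism _ hsurj
    (a₁ := N.mkQ x) (a₂ := 0) (by simpa [Submodule.Quotient.mk_eq_zero] using hx)
  simpa [Submodule.Quotient.mk_eq_zero] using this

theorem HasInnerInverse.of_bijective_comp_add_comp [CommRing R] [AddCommGroup M] [AddCommGroup N]
    [AddCommGroup P] [Module R M] [Module R N] [Module R P] [Module.Finite R N]
    {d₁ : M →ₗ[R] N} {d₀ : N →ₗ[R] P} (hd : d₀ ∘ₗ d₁ = 0) (s : N →ₗ[R] M) (t : P →ₗ[R] N)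
    (he : Function.Bijective (d₁ ∘ₗ s + t ∘ₗ d₀)) : d₀.HasInnerInverse := by
  set e := d₁ ∘ₗ s + t ∘ₗ d₀
  have hd' (x : M) : d₀ (d₁ x) = 0 := congr($hd x)
  have hker : (ker d₀).comap e = ker d₀ :=
    Submodule.comap_eq_self_of_le_comap he.2 fun x hx => by simp [e, hd', mem_ker.1 hx]
  let E := LinearEquiv.ofBijective e he
  refine ⟨E.symm ∘ₗ t, ext fun x => ?_⟩
  have hsx : E.symm (d₁ (s x)) ∈ ker d₀ := by
    rw [← hker, Submodule.mem_comap]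
    simpa [E] using hd' (s x)
  have htx : t (d₀ x) = e x - d₁ (s x) := by simp [e]
  have hEx : E.symm (e x) = x := E.symm_apply_apply x
  simp only [comp_apply, LinearEquiv.coe_coe, htx, map_sub, hEx, mem_ker.1 hsx, sub_zero]

theorem comp_comp_id_sub_add_eq_id_of_exact [Ring R] [AddCommGroup M] [AddCommGroup N]
    [AddCommGroup P] [Module R M] [Module R N] [Module R P] {f : M →ₗ[R] N} {g : N →ₗ[R] P}
    (hfg : Function.Exact f g) {u : N →ₗ[R] M} (hu : f ∘ₗ u ∘ₗ f = f) (v : P →ₗ[R] N)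
    (hv : g ∘ₗ v ∘ₗ g = g) : f ∘ₗ u ∘ₗ (id - v ∘ₗ g) + v ∘ₗ g = id := by
  ext y
  -- `y - v (g y)` lies in `ker g = range f`, on which `f ∘ u` is the identity.
  obtain ⟨x, hx⟩ := (hfg (y - v (g y))).1 (by simpa [sub_eq_zero] using congr($hv y).symm)
  have hfux : f (u (f x)) = f x := congr($hu x)
  simp only [add_apply, comp_apply, sub_apply, id_apply]
  rw [← hx, hfux, hx, sub_add_cancel]

end LinearMap

open LinearMap

theorem HomologicalComplex.d_hom_comp_d_hom {R : Type*} [Ring R] {ι : Type*} {c : ComplexShape ι}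
    (C : HomologicalComplex (ModuleCat R) c) (i j k : ι) :
    (C.d j k).hom ∘ₗ (C.d i j).hom = 0 := by
  rw [← ModuleCat.hom_comp, C.d_comp_d]; rfl

theorem HomologicalComplex.ExactAt.function_exact_d {R : Type*} [Ring R] {ι : Type*}
    {c : ComplexShape ι} {C : HomologicalComplex (ModuleCat R) c} {i j k : ι} (hC : C.ExactAt j)
    (hij : c.Rel i j) (hjk : c.Rel j k) : Function.Exact (C.d i j).hom (C.d j k).hom :=
  (ShortComplex.ShortExact.moduleCat_exact_iff_function_exact _).1
    ((C.exactAt_iff' i j k (c.prev_eq' hij) (c.next_eq' hjk)).1 hC)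

namespace ChainComplex

noncomputable def homotopyIdZeroOfHasInnerInverse {R : Type*} [Ring R]
    (C : ChainComplex (ModuleCat R) ℤ) (hC : ∀ i, C.ExactAt i)
    (hd : ∀ i j, (ComplexShape.down ℤ).Rel i j → (C.d i j).hom.HasInnerInverse) :
    Homotopy (𝟙 C) 0 := by
  choose g hg using hd
  have hrel (i : ℤ) : (ComplexShape.down ℤ).Rel i (i - 1) := by simp
  refine (Homotopy.ofEq ?_).trans (Homotopy.nullHomotopy' fun i j hji =>
    ModuleCat.ofHom (g j i hji ∘ₗ (LinearMap.id - g i (i - 1) (hrel i) ∘ₗ (C.d i (i - 1)).hom)))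
  refine HomologicalComplex.hom_ext _ _ fun m => ?_
  rw [Homotopy.nullHomotopicMap'_f (rfl : m + 1 = m + 1) (hrel m)]
  ext1
  simp only [HomologicalComplex.id_f, ModuleCat.hom_id, ModuleCat.hom_add, ModuleCat.hom_comp,
    ModuleCat.hom_ofHom, sub_comp, id_comp, comp_assoc, HomologicalComplex.d_hom_comp_d_hom,
    comp_zero, sub_zero]
  rw [add_comm]
  exact (comp_comp_id_sub_add_eq_id_of_exact ((hC m).function_exact_d rfl (hrel m))
    (hg (m + 1) m rfl) _ (hg m (m - 1) (hrel m))).symm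

theorem hasInnerInverse_d_of_hasInnerInverse_d {R : Type*} [CommRing R]
    (C : ChainComplex (ModuleCat R) ℤ) [∀ i, Module.Projective R (C.X i)]
    [∀ i, Module.Finite R (C.X i)] (hC : ∀ i, C.ExactAt i)
    (hdual : ∀ i, Function.Exact (C.d i (i - 1)).hom.dualMap (C.d (i + 1) i).hom.dualMap)
    {i j : ℤ} (hij : (ComplexShape.down ℤ).Rel i j) (hd : (C.d i j).hom.HasInnerInverse)
    (i' j' : ℤ) (hij' : (ComplexShape.down ℤ).Rel i' j') : (C.d i' j').hom.HasInnerInverse := by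
  induction j' using Int.inductionOn' (b := j) generalizing i' with
  | zero =>
    obtain rfl : i' = i := hij'.symm.trans hij
    exact hd
  | succ k _ ih =>
    subst hij'
    exact (ih (k + 1) rfl).of_exact ((hC (k + 1)).function_exact_d rfl rfl)
  | pred k _ ih =>
    obtain rfl : i' = k := by simp at hij'; omega
    exact ((ih (i' + 1) rfl).dualMap.of_exact (hdual i')).of_dualMap

end ChainComplex

theorem contractible_of_contractible_at_general
    {R : Type u} [CommRing R]
    (C : ChainComplex (ModuleCat.{u} R) ℤ)
    (hfree : ∀ n : ℤ, Module.Free R (C.X n))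
    (hfin : ∀ n : ℤ, Module.Finite R (C.X n))
    (hexact : ∀ n : ℤ, C.ExactAt n)
    (hdual : ∀ n : ℤ,
      Function.Exact (((C.d n (n - 1)).hom : _ →ₗ[R] _).dualMap)
        (((C.d (n + 1) n).hom : _ →ₗ[R] _).dualMap))
    (n : ℤ)
    (hcontr : ∃ (s : C.X n →ₗ[R] C.X (n + 1)) (t : C.X (n - 1) →ₗ[R] C.X n),
      Function.Bijective
        (((C.d (n + 1) n).hom : _ →ₗ[R] _) ∘ₗ s + t ∘ₗ ((C.d n (n - 1)).hom : _ →ₗ[R] _))) :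
    Nonempty (Homotopy (𝟙 C) 0) := by
  obtain ⟨s, t, he⟩ := hcontr
  have hn : (C.d n (n - 1)).hom.HasInnerInverse :=
    .of_bijective_comp_add_comp (C.d_hom_comp_d_hom _ _ _) s t he
  exact ⟨C.homotopyIdZeroOfHasInnerInverse hexact
    (C.hasInnerInverse_d_of_hasInnerInverse_d hexact hdual (by simp) hn)⟩

/-- Let `(R, m, k)` be a Noetherian local ring and `C` a totally acyclic complex of
finitely generated free `R`-modules (both `C` and the dual complex `Hom_R(C, R)` are
exact).  If `C` is contractible at some position `n`, i.e. there exist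
`sₙ : Cₙ → C_{n+1}` and `s_{n-1} : C_{n-1} → Cₙ` with `∂_{n+1}sₙ + s_{n-1}∂ₙ` an
isomorphism, then `C` is contractible. -/
theorem contractible_of_contractible_at
    {R : Type u} [CommRing R] [IsLocalRing R] [IsNoetherianRing R]
    (C : ChainComplex (ModuleCat.{u} R) ℤ)
    (hfree : ∀ n : ℤ, Module.Free R (C.X n))
    (hfin : ∀ n : ℤ, Module.Finite R (C.X n))
    (hexact : ∀ n : ℤ, C.ExactAt n)
    (hdual : ∀ n : ℤ,
      Function.Exact (((C.d n (n - 1)).hom : _ →ₗ[R] _).dualMap)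
        (((C.d (n + 1) n).hom : _ →ₗ[R] _).dualMap))
    (n : ℤ)
    (hcontr : ∃ (s : C.X n →ₗ[R] C.X (n + 1)) (t : C.X (n - 1) →ₗ[R] C.X n),
      Function.Bijective
        (((C.d (n + 1) n).hom : _ →ₗ[R] _) ∘ₗ s + t ∘ₗ ((C.d n (n - 1)).hom : _ →ₗ[R] _))) :
    Nonempty (Homotopy (𝟙 C) 0) :=
  contractible_of_contractible_at_general C hfree hfin hexact hdual n hcontr
end
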